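/- arXiv:2201.08481 — 3 statements merged into one kernel-verified Lean document; each statement's English description precedes it below -/
import Mathlib

section
/- Let V ∈ R^{d×n} with columns v_1,...,v_n, let nsm(V)_{ij} = exp(v_i·v_j)/Σ_k exp(v_i·v_k), and suppose nsm(V)_{ij} ≥ ε for some 0 < ε < 1. Then ‖v_i‖·‖v_j‖ ≥ ln ε + ‖v_i‖², and consequently if ‖v_i‖ ≥ ‖v_j‖ and ‖v_i‖ > 0, then ‖v_i‖ − ‖v_j‖ ≤ ln(1/ε)/‖v_i‖. -/
open Finset

/-- The normalized softmax matrix of a collection of embedding vectors. -/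
noncomputable def nsm {d n : ℕ} (v : Fin n → EuclideanSpace ℝ (Fin d)) (i j : Fin n) : ℝ :=
  Real.exp (inner ℝ (v i) (v j) : ℝ) / ∑ k, Real.exp (inner ℝ (v i) (v k) : ℝ)

namespace Real

/-- The denominator of a softmax contains the term `exp (f i)` for every index `i`. -/
lemma exp_div_sum_exp_le_exp_sub {ι : Type*} [Fintype ι] (f : ι → ℝ) (i j : ι) :
    exp (f j) / ∑ k, exp (f k) ≤ exp (f j - f i) := by
  rw [exp_sub]
  exact div_le_div_of_nonneg_left (exp_pos _).le (exp_pos _)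
    (single_le_sum (fun k _ => (exp_pos (f k)).le) (mem_univ i))

lemma log_add_le_of_le_exp_div_sum_exp {ι : Type*} [Fintype ι] (f : ι → ℝ) {ε : ℝ}
    (hε : 0 < ε) (i j : ι) (h : ε ≤ exp (f j) / ∑ k, exp (f k)) :
    log ε + f i ≤ f j := by
  have := (log_le_iff_le_exp hε).2 (h.trans (exp_div_sum_exp_le_exp_sub f i j))
  linarith

lemma sub_le_log_one_div_div_of_log_add_sq_le_mul {a b ε : ℝ} (ha : 0 < a)
    (h : log ε + a ^ 2 ≤ a * b) : a - b ≤ log (1 / ε) / a := by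
  rw [le_div_iff₀ ha, one_div, log_inv]
  nlinarith

end Real

theorem nsm_large_entry_length_bound_general
    (d n : ℕ) (v : Fin n → EuclideanSpace ℝ (Fin d)) (ε : ℝ)
    (hε : 0 < ε) (i j : Fin n) (hij : ε ≤ nsm v i j) :
    Real.log ε + ‖v i‖ ^ 2 ≤ ‖v i‖ * ‖v j‖ ∧
      (‖v j‖ ≤ ‖v i‖ → 0 < ‖v i‖ → ‖v i‖ - ‖v j‖ ≤ Real.log (1 / ε) / ‖v i‖) := by
  have hinner : Real.log ε + ‖v i‖ ^ 2 ≤ inner ℝ (v i) (v j) := by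
    rw [← real_inner_self_eq_norm_sq]
    exact Real.log_add_le_of_le_exp_div_sum_exp (fun k => inner ℝ (v i) (v k)) hε i j hij
  have hnorm : Real.log ε + ‖v i‖ ^ 2 ≤ ‖v i‖ * ‖v j‖ :=
    hinner.trans (real_inner_le_norm _ _)
  exact ⟨hnorm, fun _ hi => Real.sub_le_log_one_div_div_of_log_add_sq_le_mul hi hnorm⟩

theorem nsm_large_entry_length_bound
    (d n : ℕ) (v : Fin n → EuclideanSpace ℝ (Fin d)) (ε : ℝ)
    (hε : 0 < ε) (hε1 : ε < 1) (i j : Fin n) (hij : ε ≤ nsm v i j) :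
    Real.log ε + ‖v i‖ ^ 2 ≤ ‖v i‖ * ‖v j‖ ∧
      (‖v j‖ ≤ ‖v i‖ → 0 < ‖v i‖ → ‖v i‖ - ‖v j‖ ≤ Real.log (1 / ε) / ‖v i‖) :=
  nsm_large_entry_length_bound_general d n v ε hε i j hij
end

section
/- Let b ≤ n be natural numbers with b dividing n. Suppose v_1,...,v_n ∈ R^d are such that vertices are partitioned into n/b blocks of size b, all vertices in a block share the same vector, each vector has ‖v‖² = 4 ln n, and for any two vertices i, j in distinct blocks v_i·v_j ≤ ln n. Then for every pair i, j in the same block, nsm(V)_{ij} ≥ n⁴/(b n⁴ + n²) ≥ 1/(2b) (assuming n ≥ 2 and b ≥ 1). -/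
open Finset

open Real

lemma sum_exp_le_of_eq_on_of_le_off {ι : Type*} [Fintype ι] (f : ι → ℝ) (s : Finset ι)
    {A B : ℝ} (hs : ∀ k ∈ s, f k = A) (hsc : ∀ k ∉ s, f k ≤ B) :
    ∑ k, exp (f k) ≤ #s * exp A + Fintype.card ι * exp B := by
  classical
  rw [← sum_add_sum_compl s]
  have hin : ∑ k ∈ s, exp (f k) = #s * exp A := by
    rw [sum_congr rfl fun k hk => by rw [hs k hk], sum_const, nsmul_eq_mul]
  have hout : ∑ k ∈ sᶜ, exp (f k) ≤ Fintype.card ι * exp B :=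
    calc ∑ k ∈ sᶜ, exp (f k)
        ≤ ∑ _k ∈ sᶜ, exp B := sum_le_sum fun k hk => exp_le_exp.2 (hsc k (mem_compl.1 hk))
      _ = #sᶜ * exp B := by rw [sum_const, nsmul_eq_mul]
      _ ≤ Fintype.card ι * exp B := by gcongr; exact card_le_univ _
  linarith

lemma div_le_nsm_of_block {d n : ℕ} (v : Fin n → EuclideanSpace ℝ (Fin d)) {i j : Fin n}
    (s : Finset (Fin n)) {A B : ℝ} (hj : j ∈ s)
    (hs : ∀ k ∈ s, (inner ℝ (v i) (v k) : ℝ) = A)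
    (hsc : ∀ k ∉ s, (inner ℝ (v i) (v k) : ℝ) ≤ B) :
    exp A / (#s * exp A + n * exp B) ≤ nsm v i j := by
  have hbound := sum_exp_le_of_eq_on_of_le_off (fun k => (inner ℝ (v i) (v k) : ℝ)) s hs hsc
  rw [Fintype.card_fin] at hbound
  rw [nsm, hs j hj]
  exact div_le_div_of_nonneg_left (exp_pos A).le (sum_pos (fun k _ => exp_pos _) ⟨i, mem_univ i⟩)
    hbound

lemma one_div_two_mul_le_div {b x : ℝ} (hb : 1 ≤ b) (hx : 1 ≤ x) :
    1 / (2 * b) ≤ x ^ 4 / (b * x ^ 4 + x ^ 2) := by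
  have hx24 : x ^ 2 ≤ x ^ 4 := pow_le_pow_right₀ hx (by norm_num)
  rw [div_le_div_iff₀ (by positivity) (by positivity)]
  nlinarith [mul_le_mul_of_nonneg_right hb (by positivity : (0 : ℝ) ≤ x ^ 4)]

theorem softmax_block_structure_general
    (d n b : ℕ) (hb : 1 ≤ b)
    (v : Fin n → EuclideanSpace ℝ (Fin d)) (blk : Fin n → ℕ)
    (hsize : ∀ i : Fin n, (Finset.univ.filter (fun j : Fin n => blk j = blk i)).card = b)
    (hsame : ∀ i j : Fin n, blk i = blk j → v i = v j)
    (hlen : ∀ i : Fin n, ‖v i‖ ^ 2 = 4 * Real.log n)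
    (hcross : ∀ i j : Fin n, blk i ≠ blk j → (inner ℝ (v i) (v j) : ℝ) ≤ Real.log n) :
    ∀ i j : Fin n, blk i = blk j →
      ((n : ℝ) ^ 4 / (b * n ^ 4 + n ^ 2) ≤ nsm v i j ∧
        1 / (2 * b) ≤ (n : ℝ) ^ 4 / (b * n ^ 4 + n ^ 2)) := by
  intro i j hij
  have hn : (1 : ℝ) ≤ n := by exact_mod_cast i.pos
  have hblock : ∀ k ∈ univ.filter (fun k => blk k = blk i),
      (inner ℝ (v i) (v k) : ℝ) = 4 * log n := by
    intro k hk
    rw [hsame i k (mem_filter.1 hk).2.symm, real_inner_self_eq_norm_sq, hlen k]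
  have hoff : ∀ k ∉ univ.filter (fun k => blk k = blk i),
      (inner ℝ (v i) (v k) : ℝ) ≤ log n := fun k hk =>
    hcross i k fun h => hk (mem_filter.2 ⟨mem_univ k, h.symm⟩)
  have hsoftmax := div_le_nsm_of_block v _ (mem_filter.2 ⟨mem_univ j, hij.symm⟩) hblock hoff
  have hn4 : exp (4 * log n) = (n : ℝ) ^ 4 := by
    rw [← exp_log (by positivity : (0 : ℝ) < n ^ 4), log_pow]
    norm_num
  rw [hsize i, exp_log (by linarith), hn4] at hsoftmax
  exact ⟨by convert hsoftmax using 2; ring, one_div_two_mul_le_div (by exact_mod_cast hb) hn⟩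

/-- Deterministic core of Theorem 2.2: block-constant long vectors give softmax
community structure. -/
theorem softmax_block_structure
    (d n b : ℕ) (hn : 2 ≤ n) (hb : 1 ≤ b) (hdvd : b ∣ n)
    (v : Fin n → EuclideanSpace ℝ (Fin d)) (blk : Fin n → ℕ)
    (hsize : ∀ i : Fin n, (Finset.univ.filter (fun j : Fin n => blk j = blk i)).card = b)
    (hsame : ∀ i j : Fin n, blk i = blk j → v i = v j)
    (hlen : ∀ i : Fin n, ‖v i‖ ^ 2 = 4 * Real.log n)
    (hcross : ∀ i j : Fin n, blk i ≠ blk j → (inner ℝ (v i) (v j) : ℝ) ≤ Real.log n) :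
    ∀ i j : Fin n, blk i = blk j →
      ((n : ℝ) ^ 4 / (b * n ^ 4 + n ^ 2) ≤ nsm v i j ∧
        1 / (2 * b) ≤ (n : ℝ) ^ 4 / (b * n ^ 4 + n ^ 2)) :=
  softmax_block_structure_general d n b hb v blk hsize hsame hlen hcross
end

section
/- Let M be an n×n row-substochastic nonnegative matrix (each row sums to at most 1) admitting n/b disjoint blocks of size b with all within-block entries at least 1/(2b). Then M has at least (n/b)·b·(b−1)/2 = n(b−1)/2 potential community pairs at threshold ε = 1/(2b). In particular, if b ≥ 2, M has at least n/2 potential community pairs, which for ε = 1/(2b) and d < n(b−1)ε² is strictly more than the d/(2ε²) bound achievable by any Gram matrix V^T V with row sums bounded by 1 and V ∈ R^{d×n}. -/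
/-! Every index has `b - 1` partners in its own block, and both entries between block partners
are at least `1/(2b)`, so the `n(b - 1)` ordered same-block pairs all give community pairs, each
unordered pair being counted twice. The other two claims are arithmetic consequences. -/

open Finset

noncomputable def communityPairs {α : Type*} [Fintype α] [LinearOrder α] (M : Matrix α α ℝ)
    (ε : ℝ) : Finset (α × α) :=
  {p | p.1 < p.2 ∧ ε ≤ M p.1 p.2 ∧ ε ≤ M p.2 p.1}

section SameBlockPairs

variable {α : Type*} [Fintype α]

lemma card_offDiag_sameFiber [DecidableEq α] {β : Type*} [DecidableEq β] (f : α → β) (b : ℕ)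
    (hsize : ∀ i, #{j | f j = f i} = b) :
    #{p : α × α | p.1 ≠ p.2 ∧ f p.1 = f p.2} = Fintype.card α * (b - 1) := by
  have hfiber (i : α) : #{j | i ≠ j ∧ f i = f j} = b - 1 := by
    have : univ.filter (fun j => i ≠ j ∧ f i = f j) = (univ.filter fun j => f j = f i).erase i := by
      ext j; simp [eq_comm]
    rw [this, card_erase_of_mem (by simp), hsize]
  rw [card_filter, Fintype.sum_prod_type]
  simp only [← card_filter, hfiber, sum_const, card_univ, smul_eq_mul]

lemma two_mul_card_filter_lt_of_symm [LinearOrder α] (r : α → α → Prop) [DecidableRel r]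
    (hr : ∀ a b, r a b → r b a) :
    2 * #{p : α × α | p.1 < p.2 ∧ r p.1 p.2} = #{p : α × α | p.1 ≠ p.2 ∧ r p.1 p.2} := by
  have hswap : #{p : α × α | p.2 < p.1 ∧ r p.1 p.2} = #{p : α × α | p.1 < p.2 ∧ r p.1 p.2} := by
    refine card_equiv (Equiv.prodComm α α) fun p => ?_
    simp only [mem_filter, mem_univ, true_and, Equiv.prodComm_apply, Prod.fst_swap, Prod.snd_swap]
    exact and_congr_right fun _ => ⟨hr _ _, hr _ _⟩
  have hsplit : univ.filter (fun p : α × α => p.1 ≠ p.2 ∧ r p.1 p.2) =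
      univ.filter (fun p : α × α => p.1 < p.2 ∧ r p.1 p.2) ∪
        univ.filter (fun p : α × α => p.2 < p.1 ∧ r p.1 p.2) := by
    ext p; simp only [mem_filter, mem_univ, true_and, mem_union, ne_iff_lt_or_gt]; tauto
  rw [hsplit, card_union_of_disjoint, hswap, two_mul]
  exact disjoint_filter.2 fun p _ h h' => h.1.asymm h'.1

end SameBlockPairs

lemma card_mul_pred_le_two_mul_card_communityPairs {α β : Type*} [Fintype α] [LinearOrder α]
    [DecidableEq β] (M : Matrix α α ℝ) (ε : ℝ) (blk : α → β) (b : ℕ)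
    (hsize : ∀ i, #{j | blk j = blk i} = b) (hblock : ∀ i j, blk i = blk j → ε ≤ M i j) :
    Fintype.card α * (b - 1) ≤ 2 * #(communityPairs M ε) := by
  rw [← card_offDiag_sameFiber blk b hsize,
    ← two_mul_card_filter_lt_of_symm (fun i j => blk i = blk j) fun _ _ => Eq.symm]
  refine Nat.mul_le_mul_left 2 (card_le_card fun p hp => ?_)
  simp only [communityPairs, mem_filter, mem_univ, true_and] at hp ⊢
  exact ⟨hp.1, hblock _ _ hp.2, hblock _ _ hp.2.symm⟩

theorem block_matrix_many_community_pairs_general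
    (n b : ℕ) (hb1 : 1 ≤ b)
    (M : Matrix (Fin n) (Fin n) ℝ)
    (blk : Fin n → ℕ)
    (hsize : ∀ i : Fin n, (Finset.univ.filter (fun j : Fin n => blk j = blk i)).card = b)
    (hblock : ∀ i j : Fin n, blk i = blk j → 1 / (2 * (b : ℝ)) ≤ M i j) :
    ((n : ℝ) * (b - 1) / 2 ≤
        ((Finset.univ.filter (fun p : Fin n × Fin n =>
          p.1 < p.2 ∧ 1 / (2 * (b : ℝ)) ≤ M p.1 p.2 ∧ 1 / (2 * (b : ℝ)) ≤ M p.2 p.1)).card : ℝ)) ∧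
      (2 ≤ b → (n : ℝ) / 2 ≤
        ((Finset.univ.filter (fun p : Fin n × Fin n =>
          p.1 < p.2 ∧ 1 / (2 * (b : ℝ)) ≤ M p.1 p.2 ∧ 1 / (2 * (b : ℝ)) ≤ M p.2 p.1)).card : ℝ)) ∧
      (∀ d : ℕ, (d : ℝ) < (n : ℝ) * (b - 1) * (1 / (2 * (b : ℝ))) ^ 2 →
        (d : ℝ) / (2 * (1 / (2 * (b : ℝ))) ^ 2) <
        ((Finset.univ.filter (fun p : Fin n × Fin n =>
          p.1 < p.2 ∧ 1 / (2 * (b : ℝ)) ≤ M p.1 p.2 ∧ 1 / (2 * (b : ℝ)) ≤ M p.2 p.1)).card : ℝ)) := by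
  set ε : ℝ := 1 / (2 * (b : ℝ))
  change _ ≤ (#(communityPairs M ε) : ℝ) ∧ (_ → _ ≤ (#(communityPairs M ε) : ℝ)) ∧
    ∀ d : ℕ, _ → _ < (#(communityPairs M ε) : ℝ)
  have hcount : (n : ℝ) * (b - 1) ≤ 2 * #(communityPairs M ε) := by
    have h := card_mul_pred_le_two_mul_card_communityPairs M ε blk b hsize hblock
    rw [Fintype.card_fin] at h
    have := (Nat.cast_le (α := ℝ)).2 h
    push_cast [Nat.cast_sub hb1] at this
    exact this
  have hε : 0 < ε ^ 2 := by positivity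
  refine ⟨by linarith, fun hb2 => ?_, fun d hd => ?_⟩
  · have : (2 : ℝ) ≤ b := by exact_mod_cast hb2
    nlinarith [(n.cast_nonneg : (0 : ℝ) ≤ n)]
  · rw [div_lt_iff₀ (by positivity)]
    nlinarith

/-- A substochastic matrix with block community structure has many potential
community pairs at threshold `ε = 1/(2b)` — more than any low-rank Gram matrix allows. -/
theorem block_matrix_many_community_pairs
    (n b : ℕ) (hb1 : 1 ≤ b) (hdvd : b ∣ n)
    (M : Matrix (Fin n) (Fin n) ℝ)
    (hnonneg : ∀ i j, 0 ≤ M i j) (hrow : ∀ i, ∑ j, M i j ≤ 1)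
    (blk : Fin n → ℕ)
    (hsize : ∀ i : Fin n, (Finset.univ.filter (fun j : Fin n => blk j = blk i)).card = b)
    (hblock : ∀ i j : Fin n, blk i = blk j → 1 / (2 * (b : ℝ)) ≤ M i j) :
    ((n : ℝ) * (b - 1) / 2 ≤
        ((Finset.univ.filter (fun p : Fin n × Fin n =>
          p.1 < p.2 ∧ 1 / (2 * (b : ℝ)) ≤ M p.1 p.2 ∧ 1 / (2 * (b : ℝ)) ≤ M p.2 p.1)).card : ℝ)) ∧
      (2 ≤ b → (n : ℝ) / 2 ≤
        ((Finset.univ.filter (fun p : Fin n × Fin n =>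
          p.1 < p.2 ∧ 1 / (2 * (b : ℝ)) ≤ M p.1 p.2 ∧ 1 / (2 * (b : ℝ)) ≤ M p.2 p.1)).card : ℝ)) ∧
      (∀ d : ℕ, (d : ℝ) < (n : ℝ) * (b - 1) * (1 / (2 * (b : ℝ))) ^ 2 →
        (d : ℝ) / (2 * (1 / (2 * (b : ℝ))) ^ 2) <
        ((Finset.univ.filter (fun p : Fin n × Fin n =>
          p.1 < p.2 ∧ 1 / (2 * (b : ℝ)) ≤ M p.1 p.2 ∧ 1 / (2 * (b : ℝ)) ≤ M p.2 p.1)).card : ℝ)) :=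
  block_matrix_many_community_pairs_general n b hb1 M blk hsize hblock
end
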